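/- Let c > 0, t > 0, x ∈ ℝ, and p > 1 with conjugate exponent q. Suppose h : (0,∞) → [0,∞) satisfies h(u) ≤ u^{1/p - 1/2} for all u > 0. Then ∫₀^∞ h(u)·|u - x|^{-1/p}·e^{-cut} du ≤ C·t^{-1/2} for a constant C depending only on c and p. -/

import Mathlib

/-!
Write `b = 1/p < 1` and `a = c t`. Away from the singularity, on `u ∉ [x/2, 3x/2]`, we have
`|u - x| ≥ u/3`, so the integrand is at most `3^b u^{-1/2} e^{-au}`, whose integral is
`√π a^{-1/2}`. On `[x/2, 3x/2]` the factor `u^{b-1/2} e^{-au}` is at most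
`3^b (x/2)^{b-1/2} e^{-ax/2}`, and `∫ |u - x|^{-b}` over that interval is
`2 (x/2)^{1-b} / (1-b)` because `b < 1`. The product is a multiple of `(x/2)^{1/2} e^{-ax/2}`,
which is at most `a^{-1/2}`.
-/

open MeasureTheory Set Real

theorem Real.rpow_mul_exp_neg_mul_le {a c s : ℝ} (ha₀ : 0 ≤ a) (ha₁ : a ≤ 1) (hc : 0 < c)
    (hs : 0 ≤ s) : s ^ a * exp (-(c * s)) ≤ c ^ (-a) := by
  have hcs : 0 ≤ c * s := by positivity
  have hpow : (c * s) ^ a ≤ exp (c * s) := by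
    refine le_trans ?_ (add_one_le_exp (c * s))
    rcases le_total (c * s) 1 with h | h
    · linarith [rpow_le_one hcs h ha₀]
    · calc (c * s) ^ a ≤ (c * s) ^ (1 : ℝ) := rpow_le_rpow_of_exponent_le h ha₁
        _ ≤ c * s + 1 := by rw [rpow_one]; linarith
  calc s ^ a * exp (-(c * s)) = c ^ (-a) * ((c * s) ^ a / exp (c * s)) := by
        rw [mul_rpow hc.le hs, rpow_neg hc.le, exp_neg]
        field_simp [(rpow_pos_of_pos hc a).ne']
    _ ≤ c ^ (-a) :=
        mul_le_of_le_one_right (rpow_nonneg hc.le _) ((div_le_one (exp_pos _)).mpr hpow)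

theorem intervalIntegrable_abs_rpow {s : ℝ} (hs : -1 < s) (a b : ℝ) :
    IntervalIntegrable (fun v => |v| ^ s) volume a b := by
  have hpos : ∀ d, 0 ≤ d → IntervalIntegrable (fun v => |v| ^ s) volume 0 d := fun d hd =>
    (intervalIntegral.intervalIntegrable_rpow' hs).congr_uIoo fun v hv => by
      rw [uIoo_of_le hd] at hv
      simp only [abs_of_pos hv.1]
  have hzero : ∀ d, IntervalIntegrable (fun v => |v| ^ s) volume 0 d := by
    intro d
    rcases le_total 0 d with hd | hd
    · exact hpos d hd
    · rw [IntervalIntegrable.iff_comp_neg, neg_zero]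
      simpa only [abs_neg] using hpos (-d) (by linarith)
  exact (hzero a).symm.trans (hzero b)

theorem integral_abs_rpow_neg_to_self {s r : ℝ} (hs : -1 < s) (hr : 0 ≤ r) :
    ∫ v in -r..r, |v| ^ s = 2 * (r ^ (s + 1) / (s + 1)) := by
  have hright : ∫ v in (0:ℝ)..r, |v| ^ s = r ^ (s + 1) / (s + 1) := by
    rw [intervalIntegral.integral_congr (g := fun v => v ^ s) fun v hv => by
      rw [uIcc_of_le hr] at hv
      simp only [abs_of_nonneg hv.1], integral_rpow (Or.inl hs),
      zero_rpow (by linarith : s + 1 ≠ 0), sub_zero]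
  have hleft : ∫ v in -r..0, |v| ^ s = r ^ (s + 1) / (s + 1) := by
    rw [← hright]
    simpa only [abs_neg, neg_zero] using
      (intervalIntegral.integral_comp_neg (a := 0) (b := r) fun v => |v| ^ s).symm
  rw [← intervalIntegral.integral_add_adjacent_intervals (b := 0)
    (intervalIntegrable_abs_rpow hs _ _) (intervalIntegrable_abs_rpow hs _ _), hleft, hright]
  ring

theorem integrableOn_abs_sub_rpow_Icc {s : ℝ} (hs : -1 < s) (x a b : ℝ) :
    IntegrableOn (fun u => |u - x| ^ s) (Icc a b) := by
  have := (intervalIntegrable_abs_rpow hs (a - x) (b - x)).comp_sub_right x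
  simp only [sub_add_cancel] at this
  exact ((intervalIntegrable_iff').mp this).mono_set Icc_subset_uIcc

theorem integral_abs_sub_rpow_Icc {s r : ℝ} (hs : -1 < s) (x : ℝ) (hr : 0 ≤ r) :
    ∫ u in Icc (x - r) (x + r), |u - x| ^ s = 2 * (r ^ (s + 1) / (s + 1)) := by
  rw [integral_Icc_eq_integral_Ioc, ← intervalIntegral.integral_of_le (by linarith),
    intervalIntegral.integral_comp_sub_right (fun v => |v| ^ s), sub_sub_cancel_left,
    add_sub_cancel_left, integral_abs_rpow_neg_to_self hs hr]

theorem le_abs_sub_of_notMem_Icc_half {u x : ℝ} (hu : 0 ≤ u)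
    (hux : u ∉ Icc (x / 2) (3 * x / 2)) : u / 3 ≤ |u - x| := by
  rcases not_and_or.mp hux with h | h <;> rw [not_le] at h
  · rw [abs_sub_comm, abs_of_pos (by linarith)]
    linarith
  · rw [abs_of_pos (by linarith)]
    linarith

theorem rpow_mul_abs_sub_rpow_le {a b u x : ℝ} (hb : 0 ≤ b) (hu : 0 < u)
    (hux : u / 3 ≤ |u - x|) : u ^ (b - a) * |u - x| ^ (-b) ≤ 3 ^ b * u ^ (-a) := by
  have hdist : |u - x| ^ (-b) ≤ 3 ^ b * u ^ (-b) := by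
    calc |u - x| ^ (-b) ≤ (u / 3) ^ (-b) :=
          rpow_le_rpow_of_nonpos (by positivity) hux (by linarith)
      _ = 3 ^ b * u ^ (-b) := by
        rw [div_rpow hu.le (by norm_num), rpow_neg (by norm_num : (0:ℝ) ≤ 3), div_inv_eq_mul,
          mul_comm]
  calc u ^ (b - a) * |u - x| ^ (-b) ≤ u ^ (b - a) * (3 ^ b * u ^ (-b)) := by gcongr
    _ = 3 ^ b * u ^ (-a) := by
      rw [mul_left_comm, ← rpow_add hu]
      ring_nf

theorem rpow_sub_le_of_mem_Icc_half {a b u x : ℝ} (ha : 0 ≤ a) (hb : 0 ≤ b) (hu : 0 < u)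
    (hux : u ∈ Icc (x / 2) (3 * x / 2)) : u ^ (b - a) ≤ 3 ^ b * (x / 2) ^ (b - a) := by
  have hx : 0 < x / 2 := by linarith [hux.2]
  calc u ^ (b - a) = u ^ b * u ^ (-a) := by rw [sub_eq_add_neg, rpow_add hu]
    _ ≤ (3 * (x / 2)) ^ b * (x / 2) ^ (-a) := by
      refine mul_le_mul (rpow_le_rpow hu.le (by linarith [hux.2]) hb)
        (rpow_le_rpow_of_nonpos hx hux.1 (by linarith)) (by positivity) (by positivity)
    _ = 3 ^ b * (x / 2) ^ (b - a) := by
      rw [mul_rpow (by norm_num) hx.le, sub_eq_add_neg, rpow_add hx, mul_assoc]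

theorem integral_rpow_neg_half_mul_exp_neg_mul {a : ℝ} (ha : 0 < a) :
    ∫ u in Ioi 0, u ^ (-(1 / 2) : ℝ) * exp (-(a * u)) = √π * a ^ (-(1 / 2) : ℝ) := by
  have := integral_rpow_mul_exp_neg_mul_Ioi one_half_pos ha
  rwa [show (1 / 2 : ℝ) - 1 = -(1 / 2) by norm_num, Gamma_one_half_eq, one_div a,
    inv_rpow ha.le, ← rpow_neg ha.le, mul_comm] at this

noncomputable def singularPart (a b x : ℝ) : ℝ → ℝ :=
  (Icc (x / 2) (3 * x / 2)).indicator fun u =>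
    (x / 2) ^ (b - 1 / 2) * exp (-(a * (x / 2))) * |u - x| ^ (-b)

theorem rpow_mul_abs_sub_rpow_mul_exp_le {a b u x : ℝ} (ha : 0 ≤ a) (hb : 0 ≤ b)
    (hu : 0 < u) :
    u ^ (b - 1 / 2) * |u - x| ^ (-b) * exp (-(a * u)) ≤
      3 ^ b * (u ^ (-(1 / 2) : ℝ) * exp (-(a * u)) + singularPart a b x u) := by
  by_cases hux : u ∈ Icc (x / 2) (3 * x / 2)
  · have hexp : exp (-(a * u)) ≤ exp (-(a * (x / 2))) :=
      exp_le_exp.mpr (neg_le_neg (mul_le_mul_of_nonneg_left hux.1 ha))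
    have hx : 0 < x := by linarith [hux.2]
    have hpow := rpow_sub_le_of_mem_Icc_half (by norm_num : (0 : ℝ) ≤ 1 / 2) hb hu hux
    rw [singularPart, indicator_of_mem hux]
    calc u ^ (b - 1 / 2) * |u - x| ^ (-b) * exp (-(a * u))
        ≤ 3 ^ b * (x / 2) ^ (b - 1 / 2) * |u - x| ^ (-b) * exp (-(a * (x / 2))) := by gcongr
      _ = 3 ^ b * (0 + (x / 2) ^ (b - 1 / 2) * exp (-(a * (x / 2))) * |u - x| ^ (-b)) := by
          ring
      _ ≤ _ := by gcongr; positivity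
  · rw [singularPart, indicator_of_notMem hux, add_zero, ← mul_assoc]
    exact mul_le_mul_of_nonneg_right
      (rpow_mul_abs_sub_rpow_le hb hu (le_abs_sub_of_notMem_Icc_half hu.le hux)) (exp_pos _).le

theorem integrableOn_singularPart {b : ℝ} (hb : b < 1) (a x : ℝ) :
    IntegrableOn (singularPart a b x) (Ioi 0) :=
  (IntegrableOn.integrable_indicator
    ((integrableOn_abs_sub_rpow_Icc (s := -b) (by linarith) x _ _).const_mul _)
    measurableSet_Icc).integrableOn

theorem setIntegral_singularPart_le {a b : ℝ} (ha : 0 < a) (hb : b < 1) (x : ℝ) :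
    ∫ u in Ioi 0, singularPart a b x u ≤ 2 / (1 - b) * a ^ (-(1 / 2) : ℝ) := by
  have hb' : 0 < 1 - b := by linarith
  rw [singularPart, setIntegral_indicator measurableSet_Icc]
  rcases le_or_gt x 0 with hx | hx
  · have hempty : Ioi (0 : ℝ) ∩ Icc (x / 2) (3 * x / 2) = ∅ :=
      eq_empty_of_forall_notMem fun u hu => by linarith [mem_Ioi.mp hu.1, hu.2.2]
    rw [hempty, setIntegral_empty]
    positivity
  · have hx2 : 0 < x / 2 := by linarith
    have hzone : Icc (x / 2) (3 * x / 2) = Icc (x - x / 2) (x + x / 2) := by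
      congr 1 <;> ring
    have hexp : (x / 2) ^ (b - 1 / 2) * (x / 2) ^ (-b + 1) = (x / 2) ^ (1 / 2 : ℝ) := by
      rw [← rpow_add hx2]; ring_nf
    have hsub : Icc (x / 2) (3 * x / 2) ⊆ Ioi 0 := fun u hu => hx2.trans_le hu.1
    rw [inter_eq_right.mpr hsub, integral_const_mul, hzone,
      integral_abs_sub_rpow_Icc (by linarith) x hx2.le]
    calc (x / 2) ^ (b - 1 / 2) * exp (-(a * (x / 2))) * (2 * ((x / 2) ^ (-b + 1) / (-b + 1)))
        = 2 / (1 - b) * ((x / 2) ^ (1 / 2 : ℝ) * exp (-(a * (x / 2)))) := by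
          rw [← hexp, neg_add_eq_sub]; field_simp
      _ ≤ 2 / (1 - b) * a ^ (-(1 / 2) : ℝ) := by
          gcongr
          exact rpow_mul_exp_neg_mul_le (by norm_num) (by norm_num) ha hx2.le

theorem setIntegral_mul_abs_sub_rpow_mul_exp_le {a b x : ℝ} {h : ℝ → ℝ} (ha : 0 < a)
    (hb₀ : 0 ≤ b) (hb₁ : b < 1)
    (hh : ∀ u, 0 < u → 0 ≤ h u ∧ h u ≤ u ^ (b - 1 / 2)) :
    ∫ u in Ioi 0, h u * |u - x| ^ (-b) * exp (-(a * u)) ≤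
      3 ^ b * (√π + 2 / (1 - b)) * a ^ (-(1 / 2) : ℝ) := by
  have hgamma := integral_rpow_neg_half_mul_exp_neg_mul ha
  have htail : IntegrableOn (fun u => u ^ (-(1 / 2) : ℝ) * exp (-(a * u))) (Ioi 0) :=
    .of_integral_ne_zero (by rw [hgamma]; positivity)
  have hsing := integrableOn_singularPart hb₁ a x
  calc ∫ u in Ioi 0, h u * |u - x| ^ (-b) * exp (-(a * u))
      ≤ ∫ u in Ioi 0,
          3 ^ b * (u ^ (-(1 / 2) : ℝ) * exp (-(a * u)) + singularPart a b x u) := by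
        refine integral_mono_of_nonneg ?_ ((htail.add hsing).const_mul _) ?_ <;>
          filter_upwards [ae_restrict_mem measurableSet_Ioi] with u hu
        · have := (hh u hu).1
          positivity
        · calc h u * |u - x| ^ (-b) * exp (-(a * u))
              ≤ u ^ (b - 1 / 2) * |u - x| ^ (-b) * exp (-(a * u)) := by
                gcongr; exact (hh u hu).2
            _ ≤ _ := rpow_mul_abs_sub_rpow_mul_exp_le ha.le hb₀ hu
    _ = 3 ^ b * (√π * a ^ (-(1 / 2) : ℝ) + ∫ u in Ioi 0, singularPart a b x u) := by
        rw [integral_const_mul, integral_add htail hsing, hgamma]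
    _ ≤ 3 ^ b * (√π * a ^ (-(1 / 2) : ℝ) + 2 / (1 - b) * a ^ (-(1 / 2) : ℝ)) := by
        gcongr
        exact setIntegral_singularPart_le ha hb₁ x
    _ = 3 ^ b * (√π + 2 / (1 - b)) * a ^ (-(1 / 2) : ℝ) := by ring

theorem J32_estimate (c p : ℝ) (hc : 0 < c) (hp : 1 < p) :
    ∃ C : ℝ, 0 < C ∧ ∀ (t x : ℝ) (h : ℝ → ℝ), 0 < t →
      (∀ u : ℝ, 0 < u → 0 ≤ h u ∧ h u ≤ u ^ (1 / p - 1 / 2)) →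
      (∫ u in Set.Ioi (0 : ℝ), h u * |u - x| ^ (-(1 / p)) * Real.exp (-(c * u * t))) ≤
        C * t ^ (-(1 / 2) : ℝ) := by
  have hb₁ : 1 / p < 1 := (div_lt_one (by linarith)).mpr hp
  have hb' : 0 < 1 - 1 / p := by linarith
  refine ⟨3 ^ (1 / p) * (√π + 2 / (1 - 1 / p)) * c ^ (-(1 / 2) : ℝ), by positivity, ?_⟩
  intro t x h ht hh
  have hbound := setIntegral_mul_abs_sub_rpow_mul_exp_le (x := x) (mul_pos hc ht)
    (by positivity) hb₁ hh
  simp_rw [mul_right_comm c _ t]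
  rwa [mul_rpow hc.le ht.le, ← mul_assoc] at hbound
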